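/- arXiv:2408.04266 — 2 statements merged into one kernel-verified Lean document; each statement's English description precedes it below -/
import Mathlib

section
/- Let T > 0 and x₀, v₀, x_f ∈ ℝ³. Define the cubic curve p : [0,T] → ℝ³ by p(t) = Σ_{i=0}^{3} Q_i · b_{3,i}(t/T) with control points Q₀ = x₀, Q₁ = x₀ + (T/3)v₀, Q₂ = (1/2)x₀ + (1/2)x_f + (T/6)v₀, Q₃ = x_f. Then p(0) = x₀, p′(0) = v₀, p(T) = x_f, and for every twice continuously differentiable curve y : [0,T] → ℝ³ with y(0) = x₀, y′(0) = v₀ and y(T) = x_f, we have ∫₀ᵀ ‖p″(t)‖² dt ≤ ∫₀ᵀ ‖y″(t)‖² dt. -/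
/-- The `i`-th Bernstein basis polynomial of degree `n`, evaluated at `t`. -/
def bern (n i : ℕ) (t : ℝ) : ℝ := (n.choose i : ℝ) * t ^ i * (1 - t) ^ (n - i)

open Set intervalIntegral
open scoped RealInnerProductSpace

/-!
Writing `d = xf - x₀ - T • v₀`, the curve is `p t = x₀ + t • v₀ + σ t • d` with
`σ t = t² (3T - t) / (2T³)`, so `p'' t = (3 (T - t) / T³) • d`. Taylor's formula with integral
remainder gives `∫₀ᵀ (T - t) • y'' t dt = y T - y 0 - T • y' 0 = d` for every admissible `y`,
hence `∫ ⟪p'', y''⟫ = (3 / T³) ‖d‖² = ∫ ‖p''‖²`. Thus `y'' - p''` is orthogonal to `p''` in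
`L²(0, T)`, and Pythagoras gives `∫ ‖p''‖² ≤ ∫ ‖y''‖²`.
-/

theorem integral_sub_smul_iteratedDerivWithin_two {F : Type*} [NormedAddCommGroup F]
    [NormedSpace ℝ F] [CompleteSpace F] {a b : ℝ} (hab : a ≤ b) {w : ℝ → F}
    (hw : ContDiffOn ℝ 2 w (Icc a b)) :
    ∫ t in a..b, (b - t) • iteratedDerivWithin 2 w (Icc a b) t =
      w b - w a - (b - a) • derivWithin w (Icc a b) a := by
  have taylor := taylor_integral_remainder (n := 1) (x₀ := a) (x := b) (by rwa [uIcc_of_le hab])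
  simp only [uIcc_of_le hab, taylorWithinEval_succ, taylor_within_zero_eval, pow_one,
    Nat.factorial, Nat.cast_one, Nat.cast_zero, div_one, zero_add, mul_one, inv_one, one_mul,
    Nat.reduceAdd, iteratedDerivWithin_one] at taylor
  rw [← taylor]
  abel

theorem integral_norm_sq_le_of_integral_inner_eq {E : Type*} [NormedAddCommGroup E]
    [InnerProductSpace ℝ E] {a b : ℝ} (hab : a ≤ b) {f g : ℝ → E}
    (hf : ContinuousOn f (Icc a b)) (hg : ContinuousOn g (Icc a b))
    (h : ∫ t in a..b, ⟪f t, g t⟫ = ∫ t in a..b, ‖f t‖ ^ 2) :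
    ∫ t in a..b, ‖f t‖ ^ 2 ≤ ∫ t in a..b, ‖g t‖ ^ 2 := by
  rw [← uIcc_of_le hab] at hf hg
  have hff : IntervalIntegrable (fun t => ‖f t‖ ^ 2) MeasureTheory.volume a b :=
    (hf.norm.pow 2).intervalIntegrable
  have hgg : IntervalIntegrable (fun t => ‖g t‖ ^ 2) MeasureTheory.volume a b :=
    (hg.norm.pow 2).intervalIntegrable
  have hfg : IntervalIntegrable (fun t => ⟪f t, g t⟫) MeasureTheory.volume a b :=
    (hf.inner hg).intervalIntegrable
  have expand : ∫ t in a..b, ‖g t - f t‖ ^ 2 =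
      (∫ t in a..b, ‖g t‖ ^ 2) - 2 * (∫ t in a..b, ⟪f t, g t⟫) + ∫ t in a..b, ‖f t‖ ^ 2 := by
    simp_rw [norm_sub_sq_real, real_inner_comm (f _)]
    rw [integral_add (hgg.sub (hfg.const_mul 2)) hff, integral_sub hgg (hfg.const_mul 2),
      integral_const_mul]
  have : 0 ≤ ∫ t in a..b, ‖g t - f t‖ ^ 2 := integral_nonneg hab fun t _ => by positivity
  linarith

theorem integral_inner_smul_eq_inner_integral {E : Type*} [NormedAddCommGroup E]
    [InnerProductSpace ℝ E] [CompleteSpace E] {a b : ℝ} {φ : ℝ → ℝ} {g : ℝ → E}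
    (hφ : ContinuousOn φ (uIcc a b)) (hg : ContinuousOn g (uIcc a b)) (d : E) :
    ∫ t in a..b, ⟪φ t • d, g t⟫ = ⟪d, ∫ t in a..b, φ t • g t⟫ := by
  have hint : IntervalIntegrable (fun t => φ t • g t) MeasureTheory.volume a b :=
    (hφ.smul hg).intervalIntegrable
  rw [← innerSL_apply_apply, ← (innerSL ℝ d).intervalIntegral_comp_comm hint]
  simp only [innerSL_apply_apply, real_inner_smul_left, real_inner_smul_right]

theorem integral_norm_sq_mul_sub_smul {E : Type*} [NormedAddCommGroup E] [NormedSpace ℝ E]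
    (T c : ℝ) (d : E) :
    ∫ t in (0 : ℝ)..T, ‖(c * (T - t)) • d‖ ^ 2 = c ^ 2 * T ^ 3 / 3 * ‖d‖ ^ 2 := by
  have pointwise (t : ℝ) : ‖(c * (T - t)) • d‖ ^ 2 = c ^ 2 * ‖d‖ ^ 2 * (T - t) ^ 2 := by
    rw [norm_smul, mul_pow, Real.norm_eq_abs, sq_abs]
    ring
  simp_rw [pointwise]
  rw [integral_const_mul, integral_comp_sub_left (fun t => t ^ 2) T]
  norm_num
  ring

theorem sum_bern_three_smul_eq {E : Type*} [AddCommGroup E] [Module ℝ E] {T : ℝ} (hT : T ≠ 0)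
    (x₀ v₀ xf : E) (t : ℝ) :
    ∑ i : Fin 4, bern 3 i.val (t / T) •
      ![x₀, x₀ + (T / 3) • v₀, (1 / 2 : ℝ) • x₀ + (1 / 2 : ℝ) • xf + (T / 6) • v₀, xf] i =
      x₀ + t • v₀ + (t ^ 2 * (3 * T - t) / (2 * T ^ 3)) • (xf - x₀ - T • v₀) := by
  simp only [Fin.sum_univ_four, bern, Matrix.cons_val_zero, Matrix.cons_val_one,
    Matrix.cons_val_two, Matrix.cons_val_three, Matrix.tail_cons, Matrix.head_cons]
  match_scalars <;> norm_num [Nat.choose] <;> field_simp <;> ring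

section Curve

variable {E : Type*} [NormedAddCommGroup E] [NormedSpace ℝ E]

theorem HasDerivAt.const_add_smul_add_smul_const {σ : ℝ → ℝ} {σ' t : ℝ} (hσ : HasDerivAt σ σ' t)
    (x v d : E) : HasDerivAt (fun s => x + s • v + σ s • d) (v + σ' • d) t :=
  ((((hasDerivAt_id' t).smul_const v).const_add x).add (hσ.smul_const d)).congr_deriv
    (by rw [one_smul])

theorem deriv_cubic_curve (T : ℝ) (x v d : E) :
    deriv (fun t => x + t • v + (t ^ 2 * (3 * T - t) / (2 * T ^ 3)) • d) =
      fun t => v + (3 * t * (2 * T - t) / (2 * T ^ 3)) • d := by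
  funext t
  refine (HasDerivAt.const_add_smul_add_smul_const ?_ x v d).deriv
  exact (((hasDerivAt_pow 2 t).mul ((hasDerivAt_id' t).const_sub (3 * T))).div_const
    (2 * T ^ 3)).congr_deriv (by norm_num; ring)

theorem iteratedDeriv_two_cubic_curve (T : ℝ) (x v d : E) :
    iteratedDeriv 2 (fun t => x + t • v + (t ^ 2 * (3 * T - t) / (2 * T ^ 3)) • d) =
      fun t => (3 / T ^ 3 * (T - t)) • d := by
  rw [iteratedDeriv_succ, iteratedDeriv_one, deriv_cubic_curve]
  funext t
  have hσ' : HasDerivAt (fun s => 3 * s * (2 * T - s) / (2 * T ^ 3)) (3 / T ^ 3 * (T - t)) t :=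
    ((((hasDerivAt_id' t).const_mul 3).mul ((hasDerivAt_id' t).const_sub (2 * T))).div_const
      (2 * T ^ 3)).congr_deriv (by ring)
  simpa using ((hσ'.smul_const d).const_add v).deriv

end Curve

theorem stmt_10 (T : ℝ) (hT : 0 < T) (x₀ v₀ xf : EuclideanSpace ℝ (Fin 3))
    (p : ℝ → EuclideanSpace ℝ (Fin 3))
    (hp : p = fun t => ∑ i : Fin 4, bern 3 i.val (t / T) •
      ![x₀,
        x₀ + (T / 3) • v₀,
        (1 / 2 : ℝ) • x₀ + (1 / 2 : ℝ) • xf + (T / 6) • v₀,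
        xf] i) :
    p 0 = x₀ ∧ deriv p 0 = v₀ ∧ p T = xf ∧
      ∀ y : ℝ → EuclideanSpace ℝ (Fin 3),
        ContDiffOn ℝ 2 y (Set.Icc 0 T) →
        y 0 = x₀ → derivWithin y (Set.Icc 0 T) 0 = v₀ → y T = xf →
        ∫ t in (0 : ℝ)..T, ‖iteratedDeriv 2 p t‖ ^ 2 ≤
          ∫ t in (0 : ℝ)..T, ‖iteratedDerivWithin 2 y (Set.Icc 0 T) t‖ ^ 2 := by
  set d := xf - x₀ - T • v₀ with hd
  obtain rfl : p = fun t => x₀ + t • v₀ + (t ^ 2 * (3 * T - t) / (2 * T ^ 3)) • d :=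
    hp.trans (funext (sum_bern_three_smul_eq hT.ne' x₀ v₀ xf))
  refine ⟨by simp, by simp [deriv_cubic_curve], ?_, fun y hy hy0 hy0' hyT => ?_⟩
  · have : T ^ 2 * (3 * T - T) / (2 * T ^ 3) = 1 := by field_simp; ring
    simp only [this, one_smul, hd]
    abel
  have hY : ContinuousOn (iteratedDerivWithin 2 y (Icc 0 T)) (Icc 0 T) :=
    hy.continuousOn_iteratedDerivWithin le_rfl (uniqueDiffOn_Icc hT)
  rw [iteratedDeriv_two_cubic_curve]
  refine integral_norm_sq_le_of_integral_inner_eq hT.le (by fun_prop) hY ?_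
  calc ∫ t in (0 : ℝ)..T, ⟪(3 / T ^ 3 * (T - t)) • d, iteratedDerivWithin 2 y (Icc 0 T) t⟫
      = ∫ t in (0 : ℝ)..T, ⟪(T - t) • (3 / T ^ 3) • d, iteratedDerivWithin 2 y (Icc 0 T) t⟫ := by
        simp only [smul_smul, mul_comm]
    _ = ⟪(3 / T ^ 3) • d, ∫ t in (0 : ℝ)..T, (T - t) • iteratedDerivWithin 2 y (Icc 0 T) t⟫ :=
        integral_inner_smul_eq_inner_integral (by fun_prop) (uIcc_of_le hT.le ▸ hY) _
    _ = 3 / T ^ 3 * ‖d‖ ^ 2 := by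
        rw [integral_sub_smul_iteratedDerivWithin_two hT.le hy, hy0, hyT, hy0', sub_zero,
          real_inner_smul_left, real_inner_self_eq_norm_sq]
    _ = ∫ t in (0 : ℝ)..T, ‖(3 / T ^ 3 * (T - t)) • d‖ ^ 2 := by
        rw [integral_norm_sq_mul_sub_smul]
        field_simp
end

section
/- Let T > 0 and x₀, v₀, a₀, x_f ∈ ℝ³. Define the quintic curve p : [0,T] → ℝ³ by p(t) = Σ_{i=0}^{5} C_i · b_{5,i}(t/T) with control points C₀ = x₀, C₁ = x₀ + (T/5)v₀, C₂ = x₀ + (2T/5)v₀ + (T²/20)a₀, C₃ = (5/6)x₀ + (1/6)x_f + (13T/30)v₀ + (T²/15)a₀, C₄ = (1/2)x₀ + (1/2)x_f + (3T/10)v₀ + (T²/20)a₀, C₅ = x_f. Then p(0) = x₀, p′(0) = v₀, p″(0) = a₀, p(T) = x_f, and for every three-times continuously differentiable curve y : [0,T] → ℝ³ with y(0) = x₀, y′(0) = v₀, y″(0) = a₀ and y(T) = x_f, we have ∫₀ᵀ ‖p‴(t)‖² dt ≤ ∫₀ᵀ ‖y‴(t)‖² dt. -/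
open scoped RealInnerProductSpace
open Set Topology

theorem ContDiffOn.hasDerivAt_iteratedDerivWithin {𝕜 F : Type*} [NontriviallyNormedField 𝕜]
    [NormedAddCommGroup F] [NormedSpace 𝕜 F] {f : 𝕜 → F} {s : Set 𝕜} {n : ℕ} {m : ℕ} {t : 𝕜}
    (hf : ContDiffOn 𝕜 n f s) (hs : UniqueDiffOn 𝕜 s) (hm : m < n) (ht : s ∈ 𝓝 t) :
    HasDerivAt (iteratedDerivWithin m f s) (iteratedDerivWithin (m + 1) f s t) t := by
  have hd := (hf.differentiableOn_iteratedDerivWithin (by exact_mod_cast hm) hs) t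
    (mem_of_mem_nhds ht)
  rw [iteratedDerivWithin_succ]
  exact hd.hasDerivWithinAt.hasDerivAt ht

namespace intervalIntegral

variable {E : Type*} [NormedAddCommGroup E] [InnerProductSpace ℝ E]

theorem integral_norm_sq_le_integral_norm_add_sq {a b : ℝ} (hab : a ≤ b)
    {f g : ℝ → E} (hf : ContinuousOn f (Icc a b)) (hg : ContinuousOn g (Icc a b))
    (horth : ∫ t in a..b, ⟪f t, g t⟫ = 0) :
    ∫ t in a..b, ‖f t‖ ^ 2 ≤ ∫ t in a..b, ‖f t + g t‖ ^ 2 := by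
  have hint : ∀ {h : ℝ → ℝ}, ContinuousOn h (Icc a b) →
      IntervalIntegrable h MeasureTheory.volume a b :=
    fun hh => (uIcc_of_le hab ▸ hh).intervalIntegrable
  have hf2 : IntervalIntegrable (fun t => ‖f t‖ ^ 2) _ a b := hint (hf.norm.pow 2)
  have hg2 : IntervalIntegrable (fun t => ‖g t‖ ^ 2) _ a b := hint (hg.norm.pow 2)
  have hfg : IntervalIntegrable (fun t => 2 * ⟪f t, g t⟫) _ a b :=
    hint (continuousOn_const.mul (hf.inner hg))
  calc ∫ t in a..b, ‖f t‖ ^ 2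
      ≤ (∫ t in a..b, ‖f t‖ ^ 2) + ∫ t in a..b, ‖g t‖ ^ 2 :=
        le_add_of_nonneg_right (integral_nonneg hab fun t _ => sq_nonneg _)
    _ = ∫ t in a..b, (‖f t‖ ^ 2 + 2 * ⟪f t, g t⟫ + ‖g t‖ ^ 2) := by
        rw [integral_add (hf2.add hfg) hg2, integral_add hf2 hfg,
          integral_const_mul, horth, mul_zero, add_zero]
    _ = ∫ t in a..b, ‖f t + g t‖ ^ 2 := by simp_rw [norm_add_sq_real]

theorem integral_sq_mul_inner_iteratedDerivWithin_three_eq_zero {a b : ℝ} (hab : a < b) (K : E)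
    {e : ℝ → E} (he : ContDiffOn ℝ 3 e (Icc a b)) (h₀ : e a = 0)
    (h₁ : derivWithin e (Icc a b) a = 0) (h₂ : iteratedDerivWithin 2 e (Icc a b) a = 0)
    (hb : e b = 0) :
    ∫ t in a..b, (t - b) ^ 2 * ⟪K, iteratedDerivWithin 3 e (Icc a b) t⟫ = 0 := by
  let e' : ℕ → ℝ → E := fun k => iteratedDerivWithin k e (Icc a b)
  have hs : UniqueDiffOn ℝ (Icc a b) := uniqueDiffOn_Icc hab
  have hcont : ∀ k ≤ 3, ContinuousOn (fun t => ⟪K, e' k t⟫) (Icc a b) := fun k hk =>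
    continuousOn_const.inner (he.continuousOn_iteratedDerivWithin (by exact_mod_cast hk) hs)
  have hderiv : ∀ k < 3, ∀ t ∈ Ioo a b, HasDerivAt (fun t => ⟪K, e' k t⟫) ⟪K, e' (k + 1) t⟫ t :=
    fun k hk t ht => (hasDerivAt_const t K).inner ℝ
      (he.hasDerivAt_iteratedDerivWithin hs (by exact_mod_cast hk) (Icc_mem_nhds ht.1 ht.2))
        |>.congr_deriv (by simp [e'])
  -- three integrations by parts against `(t - b) ^ 2`, collected into one antiderivative
  let G : ℝ → ℝ := fun u =>
    (u - b) ^ 2 * ⟪K, e' 2 u⟫ - 2 * (u - b) * ⟪K, e' 1 u⟫ + 2 * ⟪K, e' 0 u⟫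
  have hG : ∀ t ∈ Ioo a b, HasDerivAt G ((t - b) ^ 2 * ⟪K, e' 3 t⟫) t := by
    intro t ht
    have := ((((hasDerivAt_id t).sub_const b).pow 2).mul (hderiv 2 (by norm_num) t ht)).sub
      ((((hasDerivAt_id t).sub_const b).const_mul 2).mul (hderiv 1 (by norm_num) t ht)) |>.add
      ((hderiv 0 (by norm_num) t ht).const_mul 2)
    refine this.congr_deriv ?_
    simp only [id, Pi.pow_apply]
    ring_nf
  have hGcont : ContinuousOn G (Icc a b) := by
    have := hcont 0 (by norm_num); have := hcont 1 (by norm_num); have := hcont 2 (by norm_num)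
    fun_prop
  rw [integral_eq_sub_of_hasDerivAt_of_le hab.le hGcont hG
    (ContinuousOn.intervalIntegrable (uIcc_of_le hab.le ▸ by
      have := hcont 3 le_rfl; fun_prop))]
  simp [G, e', h₀, h₁, h₂, hb]

theorem integral_norm_iteratedDeriv_three_sq_le {a b : ℝ} (hab : a < b) (K : E) {p y : ℝ → E}
    (hp : ContDiff ℝ 3 p) (hp₃ : ∀ t, iteratedDeriv 3 p t = (t - b) ^ 2 • K)
    (hy : ContDiffOn ℝ 3 y (Icc a b)) (h₀ : y a = p a)
    (h₁ : derivWithin y (Icc a b) a = deriv p a)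
    (h₂ : iteratedDerivWithin 2 y (Icc a b) a = iteratedDeriv 2 p a) (hb : y b = p b) :
    ∫ t in a..b, ‖iteratedDeriv 3 p t‖ ^ 2 ≤
      ∫ t in a..b, ‖iteratedDerivWithin 3 y (Icc a b) t‖ ^ 2 := by
  have hs : UniqueDiffOn ℝ (Icc a b) := uniqueDiffOn_Icc hab
  have he : ContDiffOn ℝ 3 (y - p) (Icc a b) := hy.sub hp.contDiffOn
  have hde : ∀ k ≤ 3, ∀ t ∈ Icc a b, iteratedDerivWithin k (y - p) (Icc a b) t =
      iteratedDerivWithin k y (Icc a b) t - iteratedDeriv k p t := fun k hk t ht => by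
    rw [iteratedDerivWithin_sub ht hs ((hy t ht).of_le (by exact_mod_cast hk))
      (hp.contDiffWithinAt.of_le (by exact_mod_cast hk)),
      iteratedDerivWithin_eq_iteratedDeriv hs (hp.contDiffAt.of_le (by exact_mod_cast hk)) ht]
  have ha : a ∈ Icc a b := left_mem_Icc.2 hab.le
  have horth := integral_sq_mul_inner_iteratedDerivWithin_three_eq_zero hab K he
    (by simp [h₀]) (by simpa [iteratedDeriv_one, h₁] using hde 1 (by norm_num) a ha)
    (by simpa [h₂] using hde 2 (by norm_num) a ha) (by simp [hb])
  calc ∫ t in a..b, ‖iteratedDeriv 3 p t‖ ^ 2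
      ≤ ∫ t in a..b, ‖iteratedDeriv 3 p t + iteratedDerivWithin 3 (y - p) (Icc a b) t‖ ^ 2 := by
        refine integral_norm_sq_le_integral_norm_add_sq hab.le
          (hp.continuous_iteratedDeriv 3 le_rfl).continuousOn
          (he.continuousOn_iteratedDerivWithin le_rfl hs) ?_
        simpa only [hp₃, real_inner_smul_left] using horth
    _ = ∫ t in a..b, ‖iteratedDerivWithin 3 y (Icc a b) t‖ ^ 2 := by
        refine integral_congr fun t ht => ?_
        rw [uIcc_of_le hab.le] at ht
        simp only [hde 3 le_rfl t ht, add_sub_cancel]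

end intervalIntegral

section MinJerkCurve

variable {F : Type*} [AddCommGroup F] [Module ℝ F]

-- The scalar weight `σ(t)` of the Taylor residual at `T` has `σ(0) = σ'(0) = σ''(0) = 0`,
-- `σ(T) = 1` and `σ'''(t) = 10 (t - T)² / T⁵`.
noncomputable def minJerkCurve (T : ℝ) (x₀ v₀ a₀ xf : F) (t : ℝ) : F :=
  x₀ + t • v₀ + (t ^ 2 / 2) • a₀ +
    ((t ^ 5 - 5 * T * t ^ 4 + 10 * T ^ 2 * t ^ 3) / (6 * T ^ 5)) •
      (xf - x₀ - T • v₀ - (T ^ 2 / 2) • a₀)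

noncomputable def minJerkControlPoints (T : ℝ) (x₀ v₀ a₀ xf : F) : Fin 6 → F :=
  ![x₀,
    x₀ + (T / 5) • v₀,
    x₀ + (2 * T / 5) • v₀ + (T ^ 2 / 20) • a₀,
    (5 / 6 : ℝ) • x₀ + (1 / 6 : ℝ) • xf + (13 * T / 30) • v₀ + (T ^ 2 / 15) • a₀,
    (1 / 2 : ℝ) • x₀ + (1 / 2 : ℝ) • xf + (3 * T / 10) • v₀ + (T ^ 2 / 20) • a₀,
    xf]

theorem sum_bern_smul_minJerkControlPoints {T : ℝ} (hT : T ≠ 0) (x₀ v₀ a₀ xf : F) (t : ℝ) :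
    ∑ i : Fin 6, bern 5 i (t / T) • minJerkControlPoints T x₀ v₀ a₀ xf i =
      minJerkCurve T x₀ v₀ a₀ xf t := by
  obtain ⟨s, rfl⟩ : ∃ s, t = s * T := ⟨t / T, by field_simp⟩
  rw [mul_div_cancel_right₀ s hT, minJerkCurve, show
    ((s * T) ^ 5 - 5 * T * (s * T) ^ 4 + 10 * T ^ 2 * (s * T) ^ 3) / (6 * T ^ 5) =
      (s ^ 5 - 5 * s ^ 4 + 10 * s ^ 3) / 6 by field_simp]
  simp only [bern, minJerkControlPoints, one_div, Fin.sum_univ_six, Nat.choose, Nat.cast_one,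
    Fin.isValue, Fin.coe_ofNat_eq_mod, Nat.zero_mod, pow_zero, mul_one, tsub_zero, one_mul,
    Matrix.cons_val_zero, add_zero, Nat.reduceAdd, Nat.cast_ofNat, Nat.one_mod, pow_one,
    Nat.add_one_sub_one, Matrix.cons_val_one, smul_add, Nat.reduceMod, Nat.reduceSub,
    Matrix.cons_val, Nat.mod_succ, tsub_self]
  module

variable (T : ℝ) (x₀ v₀ a₀ xf : F)

theorem minJerkCurve_zero : minJerkCurve T x₀ v₀ a₀ xf 0 = x₀ := by
  simp [minJerkCurve]

theorem minJerkCurve_self (hT : T ≠ 0) : minJerkCurve T x₀ v₀ a₀ xf T = xf := by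
  rw [minJerkCurve, show (T ^ 5 - 5 * T * T ^ 4 + 10 * T ^ 2 * T ^ 3) / (6 * T ^ 5) = 1 by
    field_simp; ring]
  module

end MinJerkCurve

section MinJerkCurveDeriv

variable {F : Type*} [NormedAddCommGroup F] [NormedSpace ℝ F] (T : ℝ) (x₀ v₀ a₀ xf : F)

theorem contDiff_minJerkCurve {n : WithTop ℕ∞} : ContDiff ℝ n (minJerkCurve T x₀ v₀ a₀ xf) := by
  unfold minJerkCurve; fun_prop

theorem iteratedDeriv_minJerkCurve (n : ℕ) (t : ℝ) :
    iteratedDeriv n (minJerkCurve T x₀ v₀ a₀ xf) t =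
      (if n = 0 then x₀ else 0) + (if n = 0 then t else if n = 1 then 1 else 0) • v₀ +
        ((Nat.descFactorial 2 n : ℝ) * t ^ (2 - n) / 2) • a₀ +
        (((Nat.descFactorial 5 n : ℝ) * t ^ (5 - n) -
            5 * T * ((Nat.descFactorial 4 n : ℝ) * t ^ (4 - n)) +
            10 * T ^ 2 * ((Nat.descFactorial 3 n : ℝ) * t ^ (3 - n))) / (6 * T ^ 5)) •
          (xf - x₀ - T • v₀ - (T ^ 2 / 2) • a₀) := by
  unfold minJerkCurve
  simp (disch := fun_prop) only [iteratedDeriv_fun_add, iteratedDeriv_fun_sub,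
    iteratedDeriv_smul_const, iteratedDeriv_const, iteratedDeriv_fun_id, iteratedDeriv_div_const,
    iteratedDeriv_const_mul_field, iteratedDeriv_pow]

theorem deriv_minJerkCurve_zero : deriv (minJerkCurve T x₀ v₀ a₀ xf) 0 = v₀ := by
  rw [← iteratedDeriv_one, iteratedDeriv_minJerkCurve]
  norm_num

theorem iteratedDeriv_two_minJerkCurve_zero :
    iteratedDeriv 2 (minJerkCurve T x₀ v₀ a₀ xf) 0 = a₀ := by
  rw [iteratedDeriv_minJerkCurve]
  norm_num

theorem iteratedDeriv_three_minJerkCurve (hT : T ≠ 0) (t : ℝ) :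
    iteratedDeriv 3 (minJerkCurve T x₀ v₀ a₀ xf) t =
      (t - T) ^ 2 • (10 / T ^ 5) • (xf - x₀ - T • v₀ - (T ^ 2 / 2) • a₀) := by
  rw [iteratedDeriv_minJerkCurve, smul_smul]
  norm_num
  congr 1
  field_simp
  ring

end MinJerkCurveDeriv

theorem stmt_11 (T : ℝ) (hT : 0 < T) (x₀ v₀ a₀ xf : EuclideanSpace ℝ (Fin 3))
    (p : ℝ → EuclideanSpace ℝ (Fin 3))
    (hp : p = fun t => ∑ i : Fin 6, bern 5 i.val (t / T) •
      ![x₀,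
        x₀ + (T / 5) • v₀,
        x₀ + (2 * T / 5) • v₀ + (T ^ 2 / 20) • a₀,
        (5 / 6 : ℝ) • x₀ + (1 / 6 : ℝ) • xf + (13 * T / 30) • v₀ + (T ^ 2 / 15) • a₀,
        (1 / 2 : ℝ) • x₀ + (1 / 2 : ℝ) • xf + (3 * T / 10) • v₀ + (T ^ 2 / 20) • a₀,
        xf] i) :
    p 0 = x₀ ∧ deriv p 0 = v₀ ∧ iteratedDeriv 2 p 0 = a₀ ∧ p T = xf ∧
      ∀ y : ℝ → EuclideanSpace ℝ (Fin 3),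
        ContDiffOn ℝ 3 y (Set.Icc 0 T) →
        y 0 = x₀ → derivWithin y (Set.Icc 0 T) 0 = v₀ →
        iteratedDerivWithin 2 y (Set.Icc 0 T) 0 = a₀ → y T = xf →
        ∫ t in (0 : ℝ)..T, ‖iteratedDeriv 3 p t‖ ^ 2 ≤
          ∫ t in (0 : ℝ)..T, ‖iteratedDerivWithin 3 y (Set.Icc 0 T) t‖ ^ 2 := by
  obtain rfl : p = minJerkCurve T x₀ v₀ a₀ xf :=
    hp.trans (funext (sum_bern_smul_minJerkControlPoints hT.ne' x₀ v₀ a₀ xf))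
  have hq₀ := minJerkCurve_zero T x₀ v₀ a₀ xf
  have hq₁ := deriv_minJerkCurve_zero T x₀ v₀ a₀ xf
  have hq₂ := iteratedDeriv_two_minJerkCurve_zero T x₀ v₀ a₀ xf
  have hqT := minJerkCurve_self T x₀ v₀ a₀ xf hT.ne'
  refine ⟨hq₀, hq₁, hq₂, hqT, fun y hy h₀ h₁ h₂ hb => ?_⟩
  exact intervalIntegral.integral_norm_iteratedDeriv_three_sq_le hT _ (contDiff_minJerkCurve ..)
    (iteratedDeriv_three_minJerkCurve T x₀ v₀ a₀ xf hT.ne') hy (h₀.trans hq₀.symm)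
    (h₁.trans hq₁.symm) (h₂.trans hq₂.symm) (hb.trans hqT.symm)
end
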